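/- For every k-colored permutation π of length n, the evacuation of the insertion tableau equals the path tableau produced by Fomin's growth rules along the right edge of the square diagram: ev(P(π)) = P̂(π). -/

import Mathlib

namespace KRF

/-- A letter of the alphabet `{1_1, …, 1_k, 2}`:  `one j` stands for the letter `1_j`
(with `1 ≤ j ≤ k` for genuine letters), and `two` stands for the letter `2`. -/
inductive Letter (k : ℕ) : Type where
  | one : ℕ → Letter k
  | two : Letter k
deriving DecidableEq

/-- A word over the alphabet `{1_1, …, 1_k, 2}`, listed from the leftmost letter to the
rightmost letter. -/
abbrev Word (k : ℕ) := List (Letter k)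

/-- The contribution of a letter to the rank: each `1_j` counts `1` and each `2` counts `2`. -/
def Letter.rank {k : ℕ} : Letter k → ℕ
  | .one _ => 1
  | .two => 2

/-- The rank of a word: the sum of its letters. -/
def Word.rank {k : ℕ} (w : Word k) : ℕ := (w.map Letter.rank).sum

/-- The letter `1_j` is valid when `1 ≤ j ≤ k`. -/
def Letter.Valid (k : ℕ) : Letter k → Prop
  | .one j => 1 ≤ j ∧ j ≤ k
  | .two => True

/-- A genuine word of the Fibonacci poset `Z(k)`: all of its letters are valid. -/
def Word.Valid (k : ℕ) (w : Word k) : Prop := ∀ l ∈ w, l.Valid k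

/-- The cover relation of the Fibonacci poset `Z(k)`:  `z` is covered by `w` iff `z` is
obtained from `w` either by changing a `2` into some `1_j` when all letters to the left of
that `2` are `2`'s, or by deleting the leftmost letter of the form `1_j`. -/
def ZCovers (k : ℕ) (z w : Word k) : Prop :=
  (∃ (p s : Word k) (j : ℕ), (∀ l ∈ p, l = Letter.two) ∧ 1 ≤ j ∧ j ≤ k ∧
      w = p ++ Letter.two :: s ∧ z = p ++ Letter.one j :: s) ∨
  (∃ (p s : Word k) (j : ℕ), (∀ l ∈ p, l = Letter.two) ∧ 1 ≤ j ∧ j ≤ k ∧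
      w = p ++ Letter.one j :: s ∧ z = p ++ s)

/-- `c 0 ⋖ c 1 ⋖ ⋯ ⋖ c n` is a saturated chain in `Z(k)` starting at the empty word. -/
def IsZChain (k n : ℕ) (c : ℕ → Word k) : Prop :=
  c 0 = [] ∧ ∀ i, i < n → ZCovers k (c i) (c (i + 1))

end KRF
namespace KRF

/-- A column of a (tiled and filled) `k`-ribbon Fibonacci tableau.
`single h v` is a column of height 1 (shape letter `1_h`) tiled by one `k`-ribbon of
height `h` filled with the value `v`.
`double ht hb vt vb` is a column of height 2 (shape letter `2`) tiled by a `k`-ribbon of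
height `ht` filled with `vt` stacked on top of a `k`-ribbon of height `hb` (always
`hb = k + 1 - ht` for genuine tableaux) filled with `vb`. -/
inductive Col (k : ℕ) : Type where
  | single : ℕ → ℕ → Col k
  | double : ℕ → ℕ → ℕ → ℕ → Col k
deriving DecidableEq

/-- A (tiled, filled) `k`-ribbon Fibonacci tableau: its list of columns, from the leftmost
column to the rightmost one. -/
abbrev Tab (k : ℕ) := List (Col k)

/-- The shape letter of a column. -/
def Col.shape {k : ℕ} : Col k → Letter k
  | .single h _ => Letter.one h
  | .double _ _ _ _ => Letter.two

/-- The `k`-ribbon Fibonacci shape (a word) underlying a tableau. -/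
def Tab.shape {k : ℕ} (T : Tab k) : Word k := T.map Col.shape

/-- The value in the bottom `k`-ribbon of a column. -/
def Col.bottomVal {k : ℕ} : Col k → ℕ
  | .single _ v => v
  | .double _ _ _ vb => vb

/-- The heights occurring in a column are genuine ribbon heights: between `1` and `k`,
and in a column of height 2 the two heights sum to `k + 1`. -/
def Col.HeightsValid (k : ℕ) : Col k → Prop
  | .single h _ => 1 ≤ h ∧ h ≤ k
  | .double ht hb _ _ => 1 ≤ ht ∧ ht ≤ k ∧ hb = k + 1 - ht

/-- The list of all entries of a tableau (one for each `k`-ribbon). -/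
def Tab.entries {k : ℕ} (T : Tab k) : List ℕ :=
  (T.map fun c => match c with
    | Col.single _ v => [v]
    | Col.double _ _ vt vb => [vt, vb]).flatten

/-- The list of the bottom-ribbon values of the columns of a tableau. -/
def Tab.bottoms {k : ℕ} (T : Tab k) : List ℕ := T.map Col.bottomVal

/-- `T` is a standard `k`-ribbon Fibonacci tableau with entries `1, …, n`:
heights are valid, the entries are exactly `1, …, n`,  and the tableau can be built by
placing `n, n-1, …, 1` in order, each new `k`-ribbon being either appended (as a new
rightmost height-1 column) to the shape formed by the `k`-ribbons containing larger
entries, or stacked on top of a single such `k`-ribbon.  Equivalently (and this is how we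
formalize it): the bottom entries strictly decrease from left to right (in particular the
`k`-ribbon containing the leftmost square of the bottom row contains `n`), and in each
column of height 2 the top entry is smaller than the bottom entry. -/
def IsStandardTab (k n : ℕ) (T : Tab k) : Prop :=
  (∀ c ∈ T, Col.HeightsValid k c) ∧
  (Tab.entries T).Perm (List.range' 1 n) ∧
  List.Chain' (fun a b => b < a) (Tab.bottoms T) ∧
  (∀ c ∈ T, ∀ ht hb vt vb, c = Col.double ht hb vt vb → vt < vb)

/-- Updating a (partial) path tableau along one cover step `z ⋖ w` of `Z(k)`, placing the
value `i` in the `k` new squares of `w` relative to `z`:  if `w` is obtained from `z` by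
inserting a letter `1_j` after the prefix of `2`'s, a new height-1 column with a single
ribbon of height `j` filled with `i` is created there; if `w` is obtained from `z` by
changing the letter `1_h` just after the prefix of `2`'s into a `2`, the `k` new squares
of that column form a `k`-ribbon of height `k + 1 - h` filled with `i`, stacked on top of
the already present `k`-ribbon of height `h`. -/
def updateTab (k : ℕ) (i : ℕ) : Word k → Word k → Tab k → Tab k
  | Letter.two :: z', Letter.two :: w', c :: T => c :: updateTab k i z' w' T
  | Letter.one h :: _, Letter.two :: _, Col.single _ v :: T =>
      Col.double (k + 1 - h) h i v :: T
  | z, Letter.one j :: w', T => if z = w' then Col.single j i :: T else T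
  | _, _, T => T

/-- The `k`-ribbon Fibonacci path tableau determined by a saturated chain in `Z(k)`:
for each `i = 1, …, n` the value `i` is placed in the `k` new squares of `c i` relative
to `c (i-1)`. -/
def chainTab (k : ℕ) (c : ℕ → Word k) : ℕ → Tab k
  | 0 => []
  | m + 1 => updateTab k (m + 1) (c m) (c (m + 1)) (chainTab k c m)

/-- `T` is a `k`-ribbon Fibonacci path tableau with entries `1, …, n`: it is obtained
from some saturated chain `∅ = c 0 ⋖ c 1 ⋖ ⋯ ⋖ c n` in `Z(k)` by placing `i`'s in the
`k` new squares created at the `i`-th step. -/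
def IsPathTab (k n : ℕ) (T : Tab k) : Prop :=
  ∃ c : ℕ → Word k, IsZChain k n c ∧ T = chainTab k c n

end KRF
namespace KRF

/-- A `k`-colored permutation of length `n`: a permutation `x_1 x_2 ⋯ x_n` of `{1, …, n}`
(here `x_i = perm i + 1`, using `Fin n` positions and values) together with a color
`color i ∈ {1, …, k}` attached to each entry. -/
structure ColoredPerm (n k : ℕ) : Type where
  perm : Equiv.Perm (Fin n)
  color : Fin n → ℕ
  color_pos : ∀ i, 1 ≤ color i
  color_le : ∀ i, color i ≤ k

/-- Insertion of a value `x` of color `j` into a `k`-ribbon Fibonacci tableau: compare `x`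
with the value `t` in the `k`-ribbon containing the leftmost square of the bottom row.
If the tableau is empty or `x > t`, a new leftmost height-1 column consisting of a single
`k`-ribbon of height `j` filled with `x` is created.  If `x < t`, a `k`-ribbon of height
`j` filled with `x` is placed on top of the `k`-ribbon containing `t` (which is forced to
become a `k`-ribbon of height `k + 1 - j`); if a `k`-ribbon of height `l` filled with `b`
was already on top of the ribbon containing `t`, it is bumped out and the value `b` with
color `l` is inserted recursively into the tableau formed by the columns to the right. -/
def insertVal (k : ℕ) (x j : ℕ) : Tab k → Tab k
  | [] => [Col.single j x]
  | c :: rest =>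
    if Col.bottomVal c < x then Col.single j x :: c :: rest
    else
      match c with
      | Col.single _ v => Col.double j (k + 1 - j) x v :: rest
      | Col.double ht _ vt vb => Col.double j (k + 1 - j) x vb :: insertVal k vt ht rest

/-- The insertion tableau obtained after inserting the first `i` colored entries
`x_1^{j_1}, …, x_i^{j_i}` of the `k`-colored permutation `π` into the empty tableau. -/
def PPartial (k n : ℕ) (π : ColoredPerm n k) (i : ℕ) : Tab k :=
  ((List.finRange n).take i).foldl
    (fun T m => insertVal k ((π.perm m : ℕ) + 1) (π.color m) T) []

/-- The insertion tableau `P(π)` of a `k`-colored permutation. -/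
def PTab (k n : ℕ) (π : ColoredPerm n k) : Tab k := PPartial k n π n

/-- The chain of shapes of the partial insertion tableaux of `π`. -/
def QChain (k n : ℕ) (π : ColoredPerm n k) (i : ℕ) : Word k :=
  Tab.shape (PPartial k n π i)

/-- The recording tableau `Q(π)`: it has the same shape as `P(π)`, and after the `i`-th
insertion the value `i` is placed in the `k` squares by which the shape grew at step `i`. -/
def QTab (k n : ℕ) (π : ColoredPerm n k) : Tab k := chainTab k (QChain k n π) n

end KRF
namespace KRF

/-- Fomin's local growth rule: given the labels `ν` (bottom-left), `μ₁` (top-left),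
`μ₂` (bottom-right) of a unit square and the `X` of the square (`some j` if the square
contains an `X^j`, `none` otherwise), it computes the top-right label `λ`:
(1) if exactly one of `μ₁, μ₂` covers `ν` and the other equals `ν`, then `λ` is the
covering one; (2) if both cover `ν` then `λ = 2ν`; (3) if `μ₁ = ν = μ₂` and the square
contains an `X^j` then `λ = 1_j ν`; (4) if `μ₁ = ν = μ₂` and there is no `X`, `λ = ν`. -/
def growthRule (k : ℕ) (ν μ₁ μ₂ : Word k) (x : Option ℕ) : Word k :=
  if μ₁ = ν ∧ μ₂ = ν then
    match x with
    | some j => Letter.one j :: ν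
    | none => ν
  else if μ₁ = ν then μ₂
  else if μ₂ = ν then μ₁
  else Letter.two :: ν

/-- The content of the unit square in column `c+1` and row `r+1` (1-indexed) of the square
diagram of `π`: `some j` if it contains an `X^j` (i.e. `π` sends position `c+1` to value
`r+1`, colored `j`), and `none` otherwise. -/
def squareX (k n : ℕ) (π : ColoredPerm n k) (c r : ℕ) : Option ℕ :=
  if h : c < n ∧ r < n then
    if (π.perm ⟨c, h.1⟩ : ℕ) = r then some (π.color ⟨c, h.1⟩) else none
  else none

/-- The labels of the corners of the square diagram of `π` produced by Fomin's growth
rules: every corner on the left and bottom edges is labeled by the empty word, and the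
top-right corner of each unit square is computed by the local growth rule. -/
def growth (k n : ℕ) (π : ColoredPerm n k) : ℕ → ℕ → Word k
  | 0, _ => []
  | _ + 1, 0 => []
  | c + 1, r + 1 =>
      growthRule k (growth k n π c r) (growth k n π c (r + 1)) (growth k n π (c + 1) r)
        (squareX k n π c r)
termination_by c r => (c, r)

/-- The saturated chain read bottom-to-top up the right edge of the growth diagram. -/
def PhatChain (k n : ℕ) (π : ColoredPerm n k) (r : ℕ) : Word k := growth k n π n r

/-- The saturated chain read left-to-right along the top edge of the growth diagram. -/
def QhatChain (k n : ℕ) (π : ColoredPerm n k) (c : ℕ) : Word k := growth k n π c n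

/-- The `k`-ribbon Fibonacci path tableau `P̂(π)` obtained from the right edge of the
growth diagram of `π`. -/
def PhatTab (k n : ℕ) (π : ColoredPerm n k) : Tab k := chainTab k (PhatChain k n π) n

/-- The `k`-ribbon Fibonacci path tableau `Q̂(π)` obtained from the top edge of the
growth diagram of `π`. -/
def QhatTab (k n : ℕ) (π : ColoredPerm n k) : Tab k := chainTab k (QhatChain k n π) n

end KRF
namespace KRF

/-- The bubbling phase of one evacuation step.  The current column has an empty bottom
`k`-ribbon, below a `k`-ribbon of height `ht` filled with `a` (`hb` is the height of the
empty ribbon); `rest` is the list of columns strictly to its right.  As long as there is a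
ribbon above the empty one, `a` is compared with the entry `b` of the bottom ribbon of the
next column: if `a > b` the ribbon containing `a` drops to the bottom (keeping its height)
and the empty ribbon moves to the top of the column, where it is removed; if `a < b` the
empty ribbon is filled with `b` and the empty ribbon moves to the next column.  The result
is the position (index relative to the current column, height, whether it was a top
ribbon) of the finally removed empty `k`-ribbon, together with the updated suffix of the
tableau (with the empty ribbon removed and the columns slid left). -/
def evacLoop {k : ℕ} (ht hb a : ℕ) : Tab k → (ℕ × ℕ × Bool) × Tab k
  | [] => ((0, hb, true), [Col.single ht a])
  | c :: rest =>
    if Col.bottomVal c < a then ((0, hb, true), Col.single ht a :: c :: rest)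
    else
      match c with
      | Col.single h2 v => ((1, h2, false), Col.double ht hb a v :: rest)
      | Col.double ht' hb' vt' vb' =>
          let r := evacLoop ht' hb' vt' rest
          ((r.1.1 + 1, r.1.2.1, r.1.2.2), Col.double ht hb a vb' :: r.2)

/-- One evacuation step: erase the entry of the bottom `k`-ribbon of the leftmost column
(the largest entry) and bubble the empty ribbon until it can be removed.  Returns the
position (column index, height, whether it is a top ribbon) of the removed empty
`k`-ribbon together with the remaining (slid) tableau. -/
def evacStep (k : ℕ) : Tab k → (ℕ × ℕ × Bool) × Tab k
  | [] => ((0, 0, false), [])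
  | Col.single h _ :: rest => ((0, h, false), rest)
  | Col.double ht hb vt _ :: rest => evacLoop ht hb vt rest

/-- Place the value `v` in a `k`-ribbon of height `h` at the column with index `idx`:
if `isTop = false` a new height-1 column is inserted at index `idx`; if `isTop = true`
the ribbon is put on top of the (single) ribbon of the column at index `idx`. -/
def placeAt {k : ℕ} : ℕ → ℕ → Bool → ℕ → Tab k → Tab k
  | 0, h, false, v, T => Col.single h v :: T
  | 0, h, true, v, Col.single h0 vb :: rest => Col.double h h0 v vb :: rest
  | 0, _, true, _, T => T
  | idx + 1, h, tp, v, c :: rest => c :: placeAt idx h tp v rest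
  | _ + 1, _, _, _, [] => []

/-- The number of `k`-ribbons of a tableau. -/
def Tab.ribbonCount {k : ℕ} (T : Tab k) : ℕ :=
  (T.map fun c => match c with
    | Col.single _ _ => 1
    | Col.double _ _ _ _ => 2).sum

/-- The evacuation recursion: each step removes the largest remaining entry, bubbles the
empty ribbon to its final position, and records that entry at that position in the
evacuation tableau (which has the same shape as the original tableau).  Each step removes
exactly one `k`-ribbon, so `Tab.ribbonCount T` steps suffice. -/
def evacAux (k : ℕ) : ℕ → Tab k → Tab k
  | 0, _ => []
  | _ + 1, [] => []
  | fuel + 1, c :: rest =>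
      let s := evacStep k (c :: rest)
      placeAt s.1.1 s.1.2.1 s.1.2.2 (Col.bottomVal c) (evacAux k fuel s.2)

/-- The evacuation `ev(P)` of a (standard) `k`-ribbon Fibonacci tableau. -/
def evac (k : ℕ) (T : Tab k) : Tab k := evacAux k (Tab.ribbonCount T) T

end KRF
/-!
Both sides are path tableaux of the chain of shapes `r ↦ sh P(π|≤r)`, where `π|≤r` keeps the
entries of `π` with value at most `r`.

The label of the growth diagram at the corner `(c, r)` is the shape of the insertion tableau of
the first `c` entries of `π` restricted to values `≤ r`: adding one entry and one value changes
these shapes exactly as the local rules prescribe. The rule `λ = 2ν` comes from an entry `x ≤ r`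
inserted after the value `r + 1`, which it stacks on.

In `P(π)` the largest entry `n` is the bottom of the first column, the last entry inserted after
`n` (if any) sits on top of it, and the remaining columns form the insertion tableau of the word
with both deleted. Bubbling the empty ribbon left by `n` replays the insertion of that top entry,
so one evacuation step turns `P(π)` into `P(π|≤n-1)`, and the removed ribbon occupies exactly the
squares by which `sh P(π)` exceeds `sh P(π|≤n-1)`. Induction on `n` concludes.
-/

namespace KRF

variable {k : ℕ}

/-- Insertion of a word given as a list of `(value, color)` pairs. -/
def insertAll (k : ℕ) (L : List (ℕ × ℕ)) : Tab k :=
  L.foldl (fun T p => insertVal k p.1 p.2 T) []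

@[simp]
lemma insertAll_nil : insertAll k [] = [] := rfl

lemma insertAll_append_singleton (L : List (ℕ × ℕ)) (p : ℕ × ℕ) :
    insertAll k (L ++ [p]) = insertVal k p.1 p.2 (insertAll k L) := by
  simp [insertAll]

lemma entries_insertVal_perm (x j : ℕ) (T : Tab k) :
    (insertVal k x j T).entries.Perm (x :: T.entries) := by
  induction T generalizing x j with
  | nil => simp [insertVal, Tab.entries]
  | cons c rest ih =>
    by_cases hlt : c.bottomVal < x
    · simp [insertVal, hlt, Tab.entries]
    · cases c with
      | single h v => simp [insertVal, hlt, Tab.entries]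
      | double ht hb vt vb =>
        simp only [insertVal, hlt, if_false, Tab.entries, List.map_cons,
          List.flatten_cons] at ih ⊢
        exact ((((ih vt ht).cons vb).trans (.swap vt vb _)).cons x)

lemma entries_insertAll_perm (L : List (ℕ × ℕ)) :
    (insertAll k L).entries.Perm (L.map Prod.fst) := by
  induction L using List.reverseRecOn with
  | nil => simp [Tab.entries]
  | append_singleton L p ih =>
    rw [insertAll_append_singleton, List.map_append]
    exact (entries_insertVal_perm _ _ _).trans
      ((ih.cons p.1).trans (List.perm_append_singleton _ _).symm)

lemma ribbonCount_insertVal (x j : ℕ) (T : Tab k) :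
    (insertVal k x j T).ribbonCount = T.ribbonCount + 1 := by
  induction T generalizing x j with
  | nil => rfl
  | cons c rest ih =>
    by_cases hlt : c.bottomVal < x
    · simp [insertVal, hlt, Tab.ribbonCount]; omega
    · cases c with
      | single h v => simp [insertVal, hlt, Tab.ribbonCount]; omega
      | double ht hb vt vb =>
        have := ih vt ht
        simp only [insertVal, hlt, if_false, Tab.ribbonCount, List.map_cons,
          List.sum_cons] at this ⊢
        omega

lemma ribbonCount_insertAll (L : List (ℕ × ℕ)) : (insertAll k L).ribbonCount = L.length := by
  induction L using List.reverseRecOn with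
  | nil => rfl
  | append_singleton L p ih => simp [insertAll_append_singleton, ribbonCount_insertVal, ih]

@[simp]
lemma Tab.shape_cons (c : Col k) (T : Tab k) : Tab.shape (c :: T) = c.shape :: T.shape := rfl

lemma rank_shape (T : Tab k) : T.shape.rank = T.ribbonCount := by
  induction T with
  | nil => rfl
  | cons c rest ih =>
    cases c <;> simp [Tab.shape, Word.rank, Tab.ribbonCount, Col.shape, Letter.rank] at * <;> omega

lemma shape_insertAll_ne_of_length_ne {L M : List (ℕ × ℕ)} (h : L.length ≠ M.length) :
    (insertAll k L).shape ≠ (insertAll k M).shape := fun he => h <| by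
  rw [← ribbonCount_insertAll (k := k), ← ribbonCount_insertAll (k := k) M, ← rank_shape,
    ← rank_shape, he]

def ComplHeights (k : ℕ) (T : Tab k) : Prop :=
  ∀ ht hb vt vb, Col.double ht hb vt vb ∈ T → hb = k + 1 - ht

lemma ComplHeights.tail {c : Col k} {T : Tab k} (h : ComplHeights k (c :: T)) :
    ComplHeights k T :=
  fun ht hb vt vb hmem => h ht hb vt vb (.tail _ hmem)

lemma complHeights_insertVal (x j : ℕ) {T : Tab k} (hT : ComplHeights k T) :
    ComplHeights k (insertVal k x j T) := by
  induction T generalizing x j with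
  | nil => simp [ComplHeights, insertVal]
  | cons c rest ih =>
    by_cases hlt : c.bottomVal < x
    · simpa [ComplHeights, insertVal, hlt] using hT
    intro ht hb vt vb hmem
    cases c with
    | single h v =>
      simp only [insertVal, hlt, if_false, List.mem_cons, Col.double.injEq] at hmem
      rcases hmem with ⟨rfl, rfl, -, -⟩ | hmem
      · rfl
      · exact hT.tail _ _ _ _ hmem
    | double ht' hb' vt' vb' =>
      simp only [insertVal, hlt, if_false, List.mem_cons, Col.double.injEq] at hmem
      rcases hmem with ⟨rfl, rfl, -, -⟩ | hmem
      · rfl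
      · exact ih vt' ht' hT.tail _ _ _ _ hmem

lemma complHeights_insertAll (L : List (ℕ × ℕ)) : ComplHeights k (insertAll k L) := by
  induction L using List.reverseRecOn with
  | nil => simp [ComplHeights]
  | append_singleton L p ih =>
    rw [insertAll_append_singleton]; exact complHeights_insertVal _ _ ih

lemma insertVal_of_forall_lt (x j : ℕ) {T : Tab k} (hT : ∀ v ∈ T.entries, v < x) :
    insertVal k x j T = Col.single j x :: T := by
  cases T with
  | nil => rfl
  | cons c rest =>
    have : c.bottomVal < x := hT _ (by cases c <;> simp [Tab.entries, Col.bottomVal])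
    simp [insertVal, this]

lemma insertAll_append_max (A : List (ℕ × ℕ)) (m j : ℕ) (hA : ∀ p ∈ A, p.1 < m) :
    insertAll k (A ++ [(m, j)]) = Col.single j m :: insertAll k A := by
  rw [insertAll_append_singleton]
  refine insertVal_of_forall_lt _ _ fun v hv => ?_
  obtain ⟨p, hp, rfl⟩ := List.mem_map.mp ((entries_insertAll_perm A).subset hv)
  exact hA p hp

lemma insertAll_max_append_singleton (A S : List (ℕ × ℕ)) (m j : ℕ) (q : ℕ × ℕ)
    (hA : ∀ p ∈ A, p.1 < m) (hS : ∀ p ∈ S ++ [q], p.1 < m) :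
    insertAll k (A ++ (m, j) :: (S ++ [q])) =
      Col.double q.2 (k + 1 - q.2) q.1 m :: insertAll k (A ++ S) := by
  induction S using List.reverseRecOn generalizing q with
  | nil =>
    have hq : ¬ m < q.1 := by have := hS q (by simp); omega
    rw [List.nil_append, ← List.singleton_append, ← List.append_assoc,
      insertAll_append_singleton, insertAll_append_max A m j hA]
    simp [insertVal, Col.bottomVal, hq]
  | append_singleton S q' ih =>
    have hq : ¬ m < q.1 := by have := hS q (by simp); omega
    rw [show A ++ (m, j) :: (S ++ [q'] ++ [q]) = A ++ (m, j) :: (S ++ [q']) ++ [q] by simp,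
      insertAll_append_singleton, ih q' fun p hp => hS p (List.mem_append_left _ hp)]
    simp [insertVal, Col.bottomVal, hq, ← List.append_assoc, insertAll_append_singleton]

def restrictLE (r : ℕ) (L : List (ℕ × ℕ)) : List (ℕ × ℕ) := L.filter (·.1 ≤ r)

def shapeChain (k : ℕ) (L : List (ℕ × ℕ)) (r : ℕ) : Word k :=
  (insertAll k (restrictLE r L)).shape

lemma restrictLE_succ_of_forall_ne {r : ℕ} {L : List (ℕ × ℕ)}
    (h : ∀ p ∈ L, p.1 ≠ r + 1) :
    restrictLE (r + 1) L = restrictLE r L :=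
  List.filter_congr fun p hp => by have := h p hp; simp only [decide_eq_decide]; omega

lemma restrictLE_eq_self {r : ℕ} {L : List (ℕ × ℕ)} (h : ∀ p ∈ L, p.1 ≤ r) :
    restrictLE r L = L :=
  List.filter_eq_self.mpr fun p hp => by simpa using h p hp

lemma growthRule_of_right_eq (ν μ₁ : Word k) : growthRule k ν μ₁ ν none = μ₁ := by
  by_cases h : μ₁ = ν <;> simp [growthRule, h]

lemma growthRule_of_left_eq (ν μ₂ : Word k) : growthRule k ν ν μ₂ none = μ₂ := by
  by_cases h : μ₂ = ν <;> simp [growthRule, h]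

lemma growthRule_of_ne (ν μ₁ μ₂ : Word k) (h₁ : μ₁ ≠ ν) (h₂ : μ₂ ≠ ν) :
    growthRule k ν μ₁ μ₂ none = Letter.two :: ν := by
  simp [growthRule, h₁, h₂]

lemma shapeChain_append_singleton_of_mem {M : List (ℕ × ℕ)} {x j r : ℕ} (hx : x ≤ r)
    (hnd : (M.map Prod.fst).Nodup) (hmem : r + 1 ∈ M.map Prod.fst) :
    shapeChain k (M ++ [(x, j)]) (r + 1) =
      growthRule k (shapeChain k M r) (shapeChain k M (r + 1)) (shapeChain k (M ++ [(x, j)]) r)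
        none := by
  obtain ⟨⟨_, q⟩, hq, rfl⟩ := List.mem_map.mp hmem
  obtain ⟨A, S, rfl⟩ := List.append_of_mem hq
  simp only [List.map_append, List.map_cons, List.nodup_middle, List.nodup_cons,
    List.mem_append, not_or] at hnd
  have hA := restrictLE_succ_of_forall_ne (r := r) (L := A)
    fun p hp he => hnd.1.1 (he ▸ List.mem_map_of_mem hp)
  have hS := restrictLE_succ_of_forall_ne (r := r) (L := S)
    fun p hp he => hnd.1.2 (he ▸ List.mem_map_of_mem hp)
  have hlt : ∀ p ∈ restrictLE r A ++ restrictLE r S ++ [(x, j)], p.1 < r + 1 := by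
    simp only [restrictLE, List.mem_append, List.mem_filter, List.mem_singleton]
    rintro p (⟨⟨-, hp⟩ | ⟨-, hp⟩⟩ | rfl) <;> simp_all
  have key := insertAll_max_append_singleton (k := k) (restrictLE r A) (restrictLE r S) (r + 1) q
    (x, j) (fun p hp => hlt p (by simp [hp])) (fun p hp => hlt p (by simp_all))
  have hx' : x ≤ r + 1 := by omega
  have hr : ¬ r + 1 ≤ r := by omega
  simp only [shapeChain, restrictLE, List.filter_append, List.filter_cons] at hA hS key ⊢
  simp only [hA, hS, hx, hx', hr, key, le_refl, decide_true, decide_false, List.filter_nil,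
    if_true, Bool.false_eq_true, if_false, List.cons_append, List.append_assoc]
  rw [growthRule_of_ne] <;> first | rfl | exact shape_insertAll_ne_of_length_ne (by simp)

lemma shapeChain_append_singleton {M : List (ℕ × ℕ)} {x j : ℕ} (r : ℕ)
    (hnd : ((M ++ [(x, j)]).map Prod.fst).Nodup) :
    shapeChain k (M ++ [(x, j)]) (r + 1) =
      growthRule k (shapeChain k M r) (shapeChain k M (r + 1)) (shapeChain k (M ++ [(x, j)]) r)
        (if x = r + 1 then some j else none) := by
  simp only [List.map_append, List.map_cons, List.map_nil, List.nodup_append,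
    List.nodup_singleton, List.mem_singleton, true_and] at hnd
  rcases lt_trichotomy x (r + 1) with hx | rfl | hx
  · rw [if_neg hx.ne]
    by_cases hmem : r + 1 ∈ M.map Prod.fst
    · exact shapeChain_append_singleton_of_mem (by omega) hnd.1 hmem
    · have hM := restrictLE_succ_of_forall_ne (r := r) (L := M)
        fun p hp he => hmem (he ▸ List.mem_map_of_mem hp)
      have hx' : x ≤ r := by omega
      simp only [shapeChain, restrictLE, List.filter_append, List.filter_cons] at hM ⊢
      simp [hM, hx', hx.le, growthRule_of_left_eq]
  · have hM := restrictLE_succ_of_forall_ne (r := r) (L := M)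
      fun p hp he => hnd.2 _ (List.mem_map_of_mem hp) _ rfl he
    have hlt : ∀ p ∈ restrictLE r M, p.1 < r + 1 := by simp [restrictLE]
    simp only [shapeChain, restrictLE, List.filter_append, List.filter_cons] at hM hlt ⊢
    simp [hM, insertAll_append_max _ _ _ hlt, growthRule, Tab.shape, Col.shape]
  · have : ¬ x ≤ r + 1 := by omega
    have : ¬ x ≤ r := by omega
    rw [if_neg hx.ne']
    simp [shapeChain, restrictLE, List.filter_append, *, growthRule_of_right_eq]

def ColoredPerm.toList {n : ℕ} (π : ColoredPerm n k) : List (ℕ × ℕ) :=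
  (List.finRange n).map fun m => ((π.perm m : ℕ) + 1, π.color m)

namespace ColoredPerm

variable {n : ℕ} (π : ColoredPerm n k)

@[simp]
lemma length_toList : π.toList.length = n := by simp [toList]

lemma map_fst_toList_perm : (π.toList.map Prod.fst).Perm (List.range' 1 n) := by
  calc π.toList.map Prod.fst = ((List.finRange n).map π.perm).map ((· + 1) ∘ Fin.val) := by
        simp [toList, Function.comp_def]
    List.Perm _ ((List.finRange n).map ((· + 1) ∘ Fin.val)) := π.perm.map_finRange_perm.map _
    _ = List.range' 1 n := by
        simp [List.range'_eq_map_range, ← List.map_coe_finRange_eq_range, Function.comp_def,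
          add_comm]

lemma nodup_map_fst_toList : (π.toList.map Prod.fst).Nodup :=
  π.map_fst_toList_perm.nodup_iff.mpr List.nodup_range'

lemma take_succ_toList {c : ℕ} (hc : c < n) :
    π.toList.take (c + 1) =
      π.toList.take c ++ [((π.perm ⟨c, hc⟩ : ℕ) + 1, π.color ⟨c, hc⟩)] := by
  rw [List.take_add_one, List.getElem?_eq_getElem (by simpa)]
  simp [toList]

end ColoredPerm

lemma growth_eq_shapeChain {n : ℕ} (π : ColoredPerm n k) {c r : ℕ} (hc : c ≤ n)
    (hr : r ≤ n) :
    growth k n π c r = shapeChain k (π.toList.take c) r := by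
  induction c generalizing r with
  | zero => cases r <;> simp [growth, shapeChain, restrictLE, Tab.shape]
  | succ c ihc =>
    induction r with
    | zero =>
      have hpos : ∀ p ∈ π.toList, ¬ p.1 ≤ 0 := by simp [ColoredPerm.toList]
      have hnil : restrictLE 0 (π.toList.take (c + 1)) = [] := List.filter_eq_nil_iff.mpr
        fun p hp => by simpa using hpos p (List.mem_of_mem_take hp)
      rw [growth, shapeChain, hnil]
      rfl
    | succ r ihr =>
      have hsq : squareX k n π c r =
            if (π.perm ⟨c, hc⟩ : ℕ) + 1 = r + 1 then some (π.color ⟨c, hc⟩) else none := by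
        simp [squareX, show c < n by omega, show r < n by omega]
      rw [growth, ihc (by omega) (by omega), ihc (by omega) hr, ihr (by omega), hsq,
        π.take_succ_toList hc, shapeChain_append_singleton]
      rw [← π.take_succ_toList hc, List.map_take]
      exact π.nodup_map_fst_toList.sublist (List.take_sublist _ _)

def placeRibbon (p : ℕ × ℕ × Bool) (v : ℕ) (T : Tab k) : Tab k :=
  placeAt p.1 p.2.1 p.2.2 v T

lemma evacLoop_snd (ht a : ℕ) {R : Tab k} (hR : ComplHeights k R) :
    (evacLoop ht (k + 1 - ht) a R).2 = insertVal k a ht R := by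
  induction R generalizing ht a with
  | nil => rfl
  | cons c rest ih =>
    by_cases hlt : c.bottomVal < a
    · simp [evacLoop, insertVal, hlt]
    cases c with
    | single h v => simp [evacLoop, insertVal, hlt]
    | double ht' hb' vt' vb' =>
      obtain rfl := hR ht' hb' vt' vb' List.mem_cons_self
      simp [evacLoop, insertVal, hlt, ih ht' vt' hR.tail]

lemma Tab.exists_eq_cons_of_shape_eq_two_cons {T : Tab k} {s : Word k}
    (hT : T.shape = Letter.two :: s) :
    ∃ d T', T = d :: T' ∧ d.shape = Letter.two ∧ Tab.shape T' = s := by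
  cases T with
  | nil => cases hT
  | cons d T' => exact ⟨d, T', rfl, List.cons.inj hT⟩

lemma updateTab_one_cons (i j : ℕ) (z : Word k) (T : Tab k) :
    updateTab k i z (Letter.one j :: z) T = Col.single j i :: T := by
  rcases z with _ | ⟨_ | _, z⟩ <;> cases T <;> simp [updateTab]

lemma updateTab_stack (v h : ℕ) {s : Word k} {T : Tab k} (hT : T.shape = Letter.one h :: s) :
    updateTab k v (Letter.one h :: s) (Letter.two :: s) T = placeAt 0 (k + 1 - h) true v T ∧
      (placeAt 0 (k + 1 - h) true v T).shape = Letter.two :: s := by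
  obtain _ | ⟨_ | _, T⟩ := T <;> simp [Tab.shape, Col.shape] at hT
  obtain ⟨rfl, hT⟩ := hT
  exact ⟨rfl, by simp [placeAt, Tab.shape, Col.shape, ← hT]⟩

lemma updateTab_evacLoop (ht a v : ℕ) {R T : Tab k} (hR : ComplHeights k R)
    (hT : T.shape = (insertVal k a ht R).shape) :
    updateTab k v (insertVal k a ht R).shape (Letter.two :: R.shape) T =
        placeRibbon (evacLoop ht (k + 1 - ht) a R).1 v T ∧
      (placeRibbon (evacLoop ht (k + 1 - ht) a R).1 v T).shape = Letter.two :: R.shape := by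
  induction R generalizing ht a T with
  | nil => exact updateTab_stack v ht hT
  | cons c rest ih =>
    by_cases hlt : c.bottomVal < a
    · have hins : insertVal k a ht (c :: rest) = Col.single ht a :: c :: rest := by
        simp [insertVal, hlt]
      rw [hins] at hT ⊢
      simp only [evacLoop, hlt, if_true, placeRibbon]
      exact updateTab_stack v ht hT
    cases c with
    | single h2 v2 =>
      have hins : insertVal k a ht (Col.single h2 v2 :: rest) =
          Col.double ht (k + 1 - ht) a v2 :: rest := by simp [insertVal, hlt]
      rw [hins] at hT ⊢
      obtain ⟨d, T, rfl, hd, hT⟩ := Tab.exists_eq_cons_of_shape_eq_two_cons hT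
      simp only [evacLoop, hlt, if_false, placeRibbon, placeAt, Tab.shape_cons]
      refine ⟨?_, by rw [hd, hT]; rfl⟩
      exact congrArg (d :: ·) (updateTab_one_cons v h2 (Tab.shape rest) T)
    | double ht' hb' vt' vb' =>
      obtain rfl := hR ht' hb' vt' vb' List.mem_cons_self
      have hins : insertVal k a ht (Col.double ht' (k + 1 - ht') vt' vb' :: rest) =
          Col.double ht (k + 1 - ht) a vb' :: insertVal k vt' ht' rest := by
        simp [insertVal, hlt]
      rw [hins] at hT ⊢
      obtain ⟨d, T, rfl, hd, hT⟩ := Tab.exists_eq_cons_of_shape_eq_two_cons hT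
      obtain ⟨ih₁, ih₂⟩ := ih ht' vt' hR.tail hT
      simp only [evacLoop, hlt, if_false, placeRibbon, placeAt, Tab.shape_cons] at ih₁ ih₂ ⊢
      refine ⟨?_, by rw [hd, ih₂]; rfl⟩
      exact congrArg (d :: ·) ih₁

lemma evacAux_succ_insertAll (n : ℕ) {A S : List (ℕ × ℕ)} {m j : ℕ}
    (h : ∀ p ∈ A ++ S, p.1 < m) :
    evacAux k (n + 1) (insertAll k (A ++ (m, j) :: S)) =
      placeRibbon (evacStep k (insertAll k (A ++ (m, j) :: S))).1 m
        (evacAux k n (insertAll k (A ++ S))) := by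
  rcases S.eq_nil_or_concat' with rfl | ⟨S, q, rfl⟩
  · rw [insertAll_append_max _ _ _ fun p hp => h p (by simpa using hp), List.append_nil]
    rfl
  · rw [insertAll_max_append_singleton _ _ _ _ _ (fun p hp => h p (List.mem_append_left _ hp))
      (fun p hp => h p (List.mem_append_right _ hp))]
    simp only [evacAux, evacStep, Col.bottomVal, placeRibbon]
    rw [evacLoop_snd _ _ (complHeights_insertAll _), ← insertAll_append_singleton,
      List.append_assoc]

lemma updateTab_evacStep_insertAll (v : ℕ) {A S : List (ℕ × ℕ)} {m j : ℕ}
    (h : ∀ p ∈ A ++ S, p.1 < m) {T : Tab k} (hT : T.shape = (insertAll k (A ++ S)).shape) :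
    updateTab k v (insertAll k (A ++ S)).shape (insertAll k (A ++ (m, j) :: S)).shape T =
        placeRibbon (evacStep k (insertAll k (A ++ (m, j) :: S))).1 v T ∧
      (placeRibbon (evacStep k (insertAll k (A ++ (m, j) :: S))).1 v T).shape =
        (insertAll k (A ++ (m, j) :: S)).shape := by
  rcases S.eq_nil_or_concat' with rfl | ⟨S, q, rfl⟩
  · rw [insertAll_append_max _ _ _ fun p hp => h p (by simpa using hp)]
    rw [List.append_nil] at hT ⊢
    exact ⟨updateTab_one_cons _ _ _ _, by simp [evacStep, placeRibbon, placeAt, Col.shape, hT]⟩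
  · rw [insertAll_max_append_singleton _ _ _ _ _ (fun p hp => h p (List.mem_append_left _ hp))
      (fun p hp => h p (List.mem_append_right _ hp))]
    rw [← List.append_assoc, insertAll_append_singleton] at hT ⊢
    exact updateTab_evacLoop _ _ _ (complHeights_insertAll _) hT

lemma chainTab_congr {c c' : ℕ → Word k} {n : ℕ} (h : ∀ i ≤ n, c i = c' i) :
    chainTab k c n = chainTab k c' n := by
  induction n with
  | zero => rfl
  | succ n ih =>
    rw [chainTab, chainTab, ih fun i hi => h i (by omega), h n (by omega), h (n + 1) le_rfl]

lemma chainTab_shapeChain_succ {A S : List (ℕ × ℕ)} {m j : ℕ}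
    (h : ∀ p ∈ A ++ S, p.1 ≤ m) :
    chainTab k (shapeChain k (A ++ (m + 1, j) :: S)) (m + 1) =
      updateTab k (m + 1) (insertAll k (A ++ S)).shape (insertAll k (A ++ (m + 1, j) :: S)).shape
        (chainTab k (shapeChain k (A ++ S)) m) := by
  have hlow : ∀ i ≤ m, shapeChain k (A ++ (m + 1, j) :: S) i = shapeChain k (A ++ S) i := by
    intro i hi
    simp [shapeChain, restrictLE, List.filter_append, show ¬ m + 1 ≤ i by omega]
  have hall : ∀ p ∈ A ++ (m + 1, j) :: S, p.1 ≤ m + 1 := by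
    intro p hp
    simp only [List.mem_append, List.mem_cons] at hp
    rcases hp with hp | rfl | hp
    · exact Nat.le_succ_of_le (h p (List.mem_append_left _ hp))
    · exact le_rfl
    · exact Nat.le_succ_of_le (h p (List.mem_append_right _ hp))
  rw [chainTab, chainTab_congr hlow, hlow m le_rfl, shapeChain, shapeChain, restrictLE_eq_self h,
    restrictLE_eq_self hall]

lemma exists_eq_append_cons_of_perm_range' {L : List (ℕ × ℕ)} {m : ℕ}
    (hL : (L.map Prod.fst).Perm (List.range' 1 (m + 1))) :
    ∃ A S j, L = A ++ (m + 1, j) :: S ∧ ((A ++ S).map Prod.fst).Perm (List.range' 1 m) := by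
  have hmem : m + 1 ∈ L.map Prod.fst := hL.mem_iff.mpr (by simp)
  obtain ⟨⟨_, j⟩, hp, rfl⟩ := List.mem_map.mp hmem
  obtain ⟨A, S, rfl⟩ := List.append_of_mem hp
  refine ⟨A, S, j, rfl, List.Perm.cons_inv (a := m + 1) ?_⟩
  calc List.Perm ((m + 1) :: (A ++ S).map Prod.fst) ((A ++ (m + 1, j) :: S).map Prod.fst) := by
        simp only [List.map_append, List.map_cons]
        exact List.perm_middle.symm
    List.Perm _ (List.range' 1 (m + 1)) := hL
    List.Perm _ ((m + 1) :: List.range' 1 m) := by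
        rw [List.range'_concat, Nat.one_mul, Nat.add_comm]
        exact List.perm_append_singleton _ _

lemma evacAux_insertAll {n : ℕ} {L : List (ℕ × ℕ)}
    (hL : (L.map Prod.fst).Perm (List.range' 1 n)) :
    evacAux k n (insertAll k L) = chainTab k (shapeChain k L) n ∧
      Tab.shape (chainTab k (shapeChain k L) n) = (insertAll k L).shape := by
  induction n generalizing L with
  | zero =>
    obtain rfl : L = [] := by simpa using hL.length_eq
    exact ⟨rfl, rfl⟩
  | succ m ih =>
    obtain ⟨A, S, j, rfl, hAS⟩ := exists_eq_append_cons_of_perm_range' hL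
    have hle : ∀ p ∈ A ++ S, p.1 ≤ m := fun p hp => by
      have := (List.mem_range'_1.mp (hAS.subset (List.mem_map_of_mem hp))).2
      omega
    have hlt : ∀ p ∈ A ++ S, p.1 < m + 1 := fun p hp => Nat.lt_succ_of_le (hle p hp)
    obtain ⟨ih₁, ih₂⟩ := ih hAS
    obtain ⟨hupd, hshape⟩ := updateTab_evacStep_insertAll (m + 1) (j := j) hlt ih₂
    rw [chainTab_shapeChain_succ hle, evacAux_succ_insertAll m hlt, ih₁, hupd]
    exact ⟨rfl, hshape⟩

lemma PTab_eq_insertAll {n : ℕ} (π : ColoredPerm n k) : PTab k n π = insertAll k π.toList := by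
  rw [PTab, PPartial, List.take_of_length_le (by simp), insertAll, ColoredPerm.toList,
    List.foldl_map]

theorem evac_PTab_eq_PhatTab_general (k n : ℕ) (π : ColoredPerm n k) :
    evac k (PTab k n π) = PhatTab k n π := by
  have hcount : (PTab k n π).ribbonCount = n := by
    rw [PTab_eq_insertAll, ribbonCount_insertAll, ColoredPerm.length_toList]
  rw [evac, hcount, PTab_eq_insertAll, (evacAux_insertAll π.map_fst_toList_perm).1, PhatTab]
  refine chainTab_congr fun r hr => ?_
  rw [PhatChain, growth_eq_shapeChain π le_rfl hr, List.take_of_length_le (by simp)]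

/-- For every `k`-colored permutation `π` of length `n`, the evacuation
of the insertion tableau equals the path tableau produced by Fomin's growth rules along
the right edge of the square diagram:  `ev(P(π)) = P̂(π)`. -/
theorem evac_PTab_eq_PhatTab (k n : ℕ) (hk : 1 ≤ k) (π : ColoredPerm n k) :
    evac k (PTab k n π) = PhatTab k n π :=
  evac_PTab_eq_PhatTab_general k n π

end KRF
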